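/- arXiv:1905.04770 — 9 statements merged into one kernel-verified Lean document; each statement's English description precedes it below -/
import Mathlib

section
/- For every integer m ≥ 1 and real numbers 0 < r⁽¹⁾ < r⁽²⁾ < ... < r⁽ᵐ⁾, there exists a unique vector (α⁽¹⁾, ..., α⁽ᵐ⁾) of strictly positive real numbers with α⁽¹⁾ + ... + α⁽ᵐ⁾ = 1 such that for every j ∈ {2, ..., m}, 1 − e^{−α⁽ʲ⁾} = (1 − r⁽ʲ⁻¹⁾/r⁽ʲ⁾)·(1 − e^{−α⁽¹⁾}). -/
/-!
Write `c j = 1 - r⁽ʲ⁻¹⁾/r⁽ʲ⁾ ∈ (0, 1]`, with `c 1 = 1` because `r⁽⁰⁾ = 0`. The defining relation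
solves as `α⁽ʲ⁾ = -log (1 - c j (1 - e^{-α⁽¹⁾}))`, a strictly increasing continuous function of
`α⁽¹⁾` vanishing at `0` and equal to `α⁽¹⁾` for `j = 1`. So `∑ⱼ α⁽ʲ⁾` is a strictly increasing
continuous function of `α⁽¹⁾` which is `0` at `0` and at least `1` at `1`: the intermediate value
theorem gives exactly one `α⁽¹⁾` making the sum `1`.
-/

open Real Finset

/-- The solution `s` of `1 - e^{-s} = c (1 - e^{-t})`. -/
noncomputable def bookingLimit (c t : ℝ) : ℝ := -log (1 - c * (1 - exp (-t)))

lemma one_sub_mul_one_sub_exp_neg_pos {c : ℝ} (hc0 : 0 ≤ c) (hc1 : c ≤ 1) (t : ℝ) :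
    0 < 1 - c * (1 - exp (-t)) := by
  rcases hc0.eq_or_lt with rfl | hc0
  · simp
  · nlinarith [mul_pos hc0 (exp_pos (-t))]

lemma bookingLimit_zero (c : ℝ) : bookingLimit c 0 = 0 := by
  simp [bookingLimit]

lemma bookingLimit_one (t : ℝ) : bookingLimit 1 t = t := by
  simp [bookingLimit]

lemma one_sub_exp_neg_bookingLimit {c : ℝ} (hc0 : 0 ≤ c) (hc1 : c ≤ 1) (t : ℝ) :
    1 - exp (-bookingLimit c t) = c * (1 - exp (-t)) := by
  rw [bookingLimit, neg_neg, exp_log (one_sub_mul_one_sub_exp_neg_pos hc0 hc1 t)]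
  ring

lemma eq_bookingLimit_of_one_sub_exp_neg {c s t : ℝ} (h : 1 - exp (-s) = c * (1 - exp (-t))) :
    s = bookingLimit c t := by
  rw [bookingLimit, ← h, sub_sub_cancel, log_exp, neg_neg]

lemma strictMono_bookingLimit {c : ℝ} (hc0 : 0 < c) (hc1 : c ≤ 1) :
    StrictMono (bookingLimit c) := by
  intro s t hst
  have hexp : exp (-t) < exp (-s) := exp_lt_exp.2 (neg_lt_neg hst)
  have hlog : log (1 - c * (1 - exp (-t))) < log (1 - c * (1 - exp (-s))) :=
    log_lt_log (one_sub_mul_one_sub_exp_neg_pos hc0.le hc1 t) (by nlinarith)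
  simp only [bookingLimit]
  linarith

lemma continuous_bookingLimit {c : ℝ} (hc0 : 0 ≤ c) (hc1 : c ≤ 1) :
    Continuous (bookingLimit c) :=
  ((by fun_prop : Continuous fun t ↦ 1 - c * (1 - exp (-t))).log
    fun t ↦ (one_sub_mul_one_sub_exp_neg_pos hc0 hc1 t).ne').neg

section SumBookingLimit

variable {ι : Type*} {s : Finset ι} {c : ι → ℝ}

lemma strictMono_sum_bookingLimit (hs : s.Nonempty) (hc : ∀ j ∈ s, 0 < c j ∧ c j ≤ 1) :
    StrictMono fun t ↦ ∑ j ∈ s, bookingLimit (c j) t :=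
  fun _ _ hst ↦ sum_lt_sum_of_nonempty hs fun j hj ↦
    strictMono_bookingLimit (hc j hj).1 (hc j hj).2 hst

lemma existsUnique_sum_bookingLimit_eq (hc : ∀ j ∈ s, 0 < c j ∧ c j ≤ 1) {i : ι} (hi : i ∈ s)
    (hci : c i = 1) {y : ℝ} (hy : 0 ≤ y) :
    ∃! t, ∑ j ∈ s, bookingLimit (c j) t = y := by
  have hmono := strictMono_sum_bookingLimit ⟨i, hi⟩ hc
  have hcont : Continuous fun t ↦ ∑ j ∈ s, bookingLimit (c j) t :=
    continuous_finsetSum s fun j hj ↦ continuous_bookingLimit (hc j hj).1.le (hc j hj).2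
  have hzero : ∑ j ∈ s, bookingLimit (c j) 0 = 0 := by simp [bookingLimit_zero]
  have hge : y ≤ ∑ j ∈ s, bookingLimit (c j) y := by
    calc y = bookingLimit (c i) y := by rw [hci, bookingLimit_one]
      _ ≤ ∑ j ∈ s, bookingLimit (c j) y :=
        single_le_sum (fun j hj ↦ bookingLimit_zero (c j) ▸
          (strictMono_bookingLimit (hc j hj).1 (hc j hj).2).monotone hy) hi
  obtain ⟨t, -, ht⟩ := intermediate_value_Icc hy hcont.continuousOn ⟨hzero.trans_le hy, hge⟩
  exact ⟨t, ht, fun u hu ↦ hmono.injective (hu.trans ht.symm)⟩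

end SumBookingLimit

noncomputable def relIncrement (r : ℕ → ℝ) (j : ℕ) : ℝ := 1 - r (j - 1) / r j

lemma relIncrement_one {r : ℕ → ℝ} (hr0 : r 0 = 0) : relIncrement r 1 = 1 := by
  simp [relIncrement, hr0]

lemma relIncrement_mem_Ioc {m : ℕ} {r : ℕ → ℝ} (hr0 : r 0 = 0)
    (hr : ∀ j, j < m → r j < r (j + 1)) {j : ℕ} (hj : j ∈ Icc 1 m) :
    0 < relIncrement r j ∧ relIncrement r j ≤ 1 := by
  obtain ⟨hj1, hjm⟩ := mem_Icc.1 hj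
  have hmono : StrictMonoOn r (Set.Iic m) :=
    strictMonoOn_Iic_of_lt_succ fun k hk ↦ hr k (by simpa using hk)
  have hprev : 0 ≤ r (j - 1) := hr0 ▸ hmono.monotoneOn (by simp) (by simp; omega) (Nat.zero_le _)
  have hlt : r (j - 1) < r j := hmono (by simp; omega) (by simpa using hjm) (by omega)
  have hrj : 0 < r j := hprev.trans_lt hlt
  constructor
  · simpa [relIncrement, sub_pos] using (div_lt_one hrj).2 hlt
  · simpa [relIncrement] using div_nonneg hprev hrj.le

lemma eq_bookingLimit_relIncrement {m : ℕ} {r β : ℕ → ℝ} (hr0 : r 0 = 0)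
    (hβ : ∀ j ∈ Icc 2 m, 1 - exp (-(β j)) = (1 - r (j - 1) / r j) * (1 - exp (-(β 1)))) :
    ∀ j ∈ Icc 1 m, β j = bookingLimit (relIncrement r j) (β 1) := by
  intro j hj
  obtain rfl | hj2 := eq_or_ne j 1
  · rw [relIncrement_one hr0, bookingLimit_one]
  · exact eq_bookingLimit_of_one_sub_exp_neg (hβ j (by simp at hj ⊢; omega))

/-- Proposition 1 (first part): existence and uniqueness of the booking limits
`α⁽¹⁾, …, α⁽ᵐ⁾`: positive, summing to 1, with
`1 − e^{−α⁽ʲ⁾} = (1 − r⁽ʲ⁻¹⁾/r⁽ʲ⁾)·(1 − e^{−α⁽¹⁾})` for `j = 2, …, m`.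
Here `r 0 = 0` and `0 < r 1 < … < r m`. -/
theorem stmt_0 (m : ℕ) (hm : 1 ≤ m) (r : ℕ → ℝ) (hr0 : r 0 = 0)
    (hr : ∀ j, j < m → r j < r (j + 1)) :
    ∃ α : ℕ → ℝ,
      ((∀ j ∈ Finset.Icc 1 m, 0 < α j) ∧
        (∑ j ∈ Finset.Icc 1 m, α j) = 1 ∧
        (∀ j ∈ Finset.Icc 2 m,
          1 - Real.exp (-(α j)) = (1 - r (j - 1) / r j) * (1 - Real.exp (-(α 1))))) ∧
      (∀ β : ℕ → ℝ,
        ((∀ j ∈ Finset.Icc 1 m, 0 < β j) ∧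
          (∑ j ∈ Finset.Icc 1 m, β j) = 1 ∧
          (∀ j ∈ Finset.Icc 2 m,
            1 - Real.exp (-(β j)) = (1 - r (j - 1) / r j) * (1 - Real.exp (-(β 1))))) →
        ∀ j ∈ Finset.Icc 1 m, β j = α j) := by
  have hc := fun j (hj : j ∈ Icc 1 m) ↦ relIncrement_mem_Ioc hr0 hr hj
  have h1 : 1 ∈ Icc 1 m := by simp [hm]
  obtain ⟨t, ht, huniq⟩ :=
    existsUnique_sum_bookingLimit_eq hc h1 (relIncrement_one hr0) zero_le_one
  have htpos : 0 < t := (strictMono_sum_bookingLimit ⟨1, h1⟩ hc).lt_iff_lt.1 <| by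
    simp only [bookingLimit_zero, sum_const_zero, ht, zero_lt_one]
  refine ⟨fun j ↦ bookingLimit (relIncrement r j) t, ⟨fun j hj ↦ ?_, ht, fun j hj ↦ ?_⟩, ?_⟩
  · exact bookingLimit_zero (relIncrement r j) ▸
      strictMono_bookingLimit (hc j hj).1 (hc j hj).2 htpos
  · have hj' : j ∈ Icc 1 m := by simp at hj ⊢; omega
    simp only [relIncrement_one hr0, bookingLimit_one]
    exact one_sub_exp_neg_bookingLimit (hc j hj').1.le (hc j hj').2 t
  · rintro β ⟨-, hβsum, hβ⟩ j hj
    have hβ' := eq_bookingLimit_relIncrement hr0 hβ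
    have hβ1 : β 1 = t := huniq _ (by rw [← hβsum]; exact (sum_congr rfl hβ').symm)
    rw [hβ' j hj, hβ1]
end

section
/- If m ≥ 2, then (1 − 1/e)·σ⁽¹⁾ < 1 − e^{−σ⁽¹⁾} < 1 − e^{−α⁽¹⁾} (in particular σ⁽¹⁾ < α⁽¹⁾). -/
/-- Chord inequality for the strictly convex exponential: for `x < 0` and `0 < c < 1`,
`exp (c*x) < 1 - c + c * exp x`. -/
lemma exp_chord (x c : ℝ) (hx : x < 0) (hc0 : 0 < c) (hc1 : c < 1) :
    Real.exp (c * x) < 1 - c + c * Real.exp x := by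
  have h := strictConvexOn_exp.2 (Set.mem_univ (0 : ℝ)) (Set.mem_univ x)
    (ne_of_lt hx).symm (by linarith : (0:ℝ) < 1 - c) hc0 (by ring)
  simpa [smul_eq_mul, Real.exp_zero] using h

/-- Proposition 2, inequality (8): if `m ≥ 2` then
`(1 − 1/e)·σ⁽¹⁾ < 1 − e^{−σ⁽¹⁾} < 1 − e^{−α⁽¹⁾}` (in particular `σ⁽¹⁾ < α⁽¹⁾`). -/
theorem stmt_5 (m : ℕ) (hm : 2 ≤ m) (r : ℕ → ℝ) (hr0 : r 0 = 0)
    (hr : ∀ j, j < m → r j < r (j + 1))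
    (α : ℕ → ℝ)
    (hαpos : ∀ j ∈ Finset.Icc 1 m, 0 < α j)
    (hαsum : (∑ j ∈ Finset.Icc 1 m, α j) = 1)
    (hαeq : ∀ j ∈ Finset.Icc 2 m,
      1 - Real.exp (-(α j)) = (1 - r (j - 1) / r j) * (1 - Real.exp (-(α 1))))
    (σ : ℕ → ℝ)
    (hσ : ∀ j ∈ Finset.Icc 1 m,
      σ j = (1 - r (j - 1) / r j) *
        (1 + ∑ j' ∈ Finset.Icc 2 m, (1 - r (j' - 1) / r j'))⁻¹) :
    (1 - 1 / Real.exp 1) * σ 1 < 1 - Real.exp (-(σ 1)) ∧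
      1 - Real.exp (-(σ 1)) < 1 - Real.exp (-(α 1)) ∧
      σ 1 < α 1 := by
  -- positivity of r on [1, m]
  have hrpos : ∀ j, 1 ≤ j → j ≤ m → 0 < r j := by
    intro j h1 h2
    induction j with
    | zero => omega
    | succ k ih =>
      rcases Nat.eq_zero_or_pos k with hk | hk
      · subst hk
        have := hr 0 (by omega)
        rwa [hr0] at this
      · have h3 := ih (by omega) (by omega)
        have h4 := hr k (by omega)
        linarith
  -- the coefficients c j are in (0,1) for j in [2, m]
  have hc : ∀ j ∈ Finset.Icc 2 m, 0 < 1 - r (j - 1) / r j ∧ 1 - r (j - 1) / r j < 1 := by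
    intro j hj
    rw [Finset.mem_Icc] at hj
    have hj1 : 0 < r (j - 1) := hrpos (j - 1) (by omega) (by omega)
    have hjj : 0 < r j := hrpos j (by omega) (by omega)
    have hlt : r (j - 1) < r j := by
      have := hr (j - 1) (by omega)
      have : j - 1 + 1 = j := by omega
      rw [← this]; exact hr (j - 1) (by omega)
    constructor
    · have : r (j - 1) / r j < 1 := (div_lt_one hjj).mpr hlt
      linarith
    · have : 0 < r (j - 1) / r j := div_pos hj1 hjj
      linarith
  set S := ∑ j' ∈ Finset.Icc 2 m, (1 - r (j' - 1) / r j') with hS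
  have hne : (Finset.Icc 2 m).Nonempty := ⟨2, Finset.mem_Icc.mpr ⟨le_refl 2, hm⟩⟩
  have hSpos : 0 < S := Finset.sum_pos (fun j hj => (hc j hj).1) hne
  have h1m : (1 : ℕ) ∈ Finset.Icc 1 m := Finset.mem_Icc.mpr ⟨le_refl 1, by omega⟩
  have hσ1 : σ 1 = (1 + S)⁻¹ := by
    have := hσ 1 h1m
    have hr1 : 0 < r 1 := hrpos 1 le_rfl (by omega)
    simp [hr0] at this
    rw [this]
  have hσ1pos : 0 < σ 1 := by rw [hσ1]; positivity
  have hσ1lt1 : σ 1 < 1 := by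
    rw [hσ1]
    rw [inv_lt_one_iff₀]; right; linarith
  have hα1pos : 0 < α 1 := hαpos 1 h1m
  -- key: σ 1 < α 1
  have hkey : σ 1 < α 1 := by
    by_contra hcon
    push_neg at hcon   -- α 1 ≤ σ 1
    -- for j in [2,m], α j < c j * σ 1
    have hαj : ∀ j ∈ Finset.Icc 2 m, α j < (1 - r (j - 1) / r j) * σ 1 := by
      intro j hj
      obtain ⟨hcj0, hcj1⟩ := hc j hj
      have hchord := exp_chord (-(α 1)) (1 - r (j - 1) / r j) (by linarith) hcj0 hcj1
      have heq := hαeq j hj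
      -- 1 - exp(-(α j)) = c * (1 - exp(-(α 1))) < 1 - exp(c * (-(α 1)))
      have h2 : Real.exp ((1 - r (j - 1) / r j) * (-(α 1))) < Real.exp (-(α j)) := by
        nlinarith [hchord, heq]
      have h3 : -(α j) > (1 - r (j - 1) / r j) * (-(α 1)) := by
        exact Real.exp_lt_exp.mp h2
      nlinarith
    -- splitting the sum
    have hsplit : Finset.Icc 1 m = insert 1 (Finset.Icc 2 m) := by
      ext x; simp [Finset.mem_Icc, Finset.mem_insert]; omega
    have h1notin : (1 : ℕ) ∉ Finset.Icc 2 m := by simp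
    have hsum : (∑ j ∈ Finset.Icc 1 m, α j) = α 1 + ∑ j ∈ Finset.Icc 2 m, α j := by
      rw [hsplit, Finset.sum_insert h1notin]
    have hlt : (∑ j ∈ Finset.Icc 2 m, α j) < ∑ j ∈ Finset.Icc 2 m, (1 - r (j - 1) / r j) * σ 1 := by
      exact Finset.sum_lt_sum_of_nonempty hne hαj
    have hSσ : (∑ j ∈ Finset.Icc 2 m, (1 - r (j - 1) / r j) * σ 1) = S * σ 1 := by
      rw [hS, Finset.sum_mul]
    have hσS : σ 1 * (1 + S) = 1 := by
      rw [hσ1]; field_simp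
    nlinarith [hsum, hlt, hSσ, hσS, hαsum]
  refine ⟨?_, ?_, hkey⟩
  · -- (1 - 1/e) σ1 < 1 - exp(-σ1)
    have h := exp_chord (-1) (σ 1) (by norm_num) hσ1pos hσ1lt1
    rw [Real.exp_neg] at h
    have : Real.exp (-(σ 1)) < 1 - σ 1 + σ 1 * (Real.exp 1)⁻¹ := by
      rw [show σ 1 * (-1) = -(σ 1) by ring] at h
      exact h
    have he : (0:ℝ) < Real.exp 1 := Real.exp_pos 1
    rw [one_div]
    nlinarith
  · have : Real.exp (-(α 1)) < Real.exp (-(σ 1)) := Real.exp_lt_exp.mpr (by linarith)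
    linarith
end

section
/- If m ≥ 2, then 1/(1 + ln(r⁽ᵐ⁾/r⁽¹⁾)) < σ⁽¹⁾. -/
/-- Proposition 2, inequality (9): if `m ≥ 2` then
`1/(1 + ln(r⁽ᵐ⁾/r⁽¹⁾)) < σ⁽¹⁾`. -/
theorem stmt_6 (m : ℕ) (hm : 2 ≤ m) (r : ℕ → ℝ) (hr0 : r 0 = 0)
    (hr : ∀ j, j < m → r j < r (j + 1))
    (σ : ℕ → ℝ)
    (hσ : ∀ j ∈ Finset.Icc 1 m,
      σ j = (1 - r (j - 1) / r j) *
        (1 + ∑ j' ∈ Finset.Icc 2 m, (1 - r (j' - 1) / r j'))⁻¹) :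
    1 / (1 + Real.log (r m / r 1)) < σ 1 := by
  -- positivity of r on [1, m]
  have hpos : ∀ n, 1 ≤ n → n ≤ m → 0 < r n := by
    intro n h1 h2
    induction n with
    | zero => omega
    | succ k ih =>
      rcases Nat.eq_zero_or_pos k with hk | hk
      · subst hk
        have := hr 0 (by omega)
        linarith [hr 0 (by omega)]
      · have := hr k (by omega)
        have := ih hk (by omega)
        linarith
  -- key inequality
  have hkey : ∀ a b : ℝ, 0 < a → a < b → 1 - a / b < Real.log b - Real.log a := by
    intro a b ha hab
    have hb : 0 < b := ha.trans hab
    have h1 : Real.log (a / b) < a / b - 1 := by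
      apply Real.log_lt_sub_one_of_pos (div_pos ha hb)
      intro h
      have : a = b := by
        field_simp at h
        linarith
      linarith
    rw [Real.log_div ha.ne' hb.ne'] at h1
    linarith
  -- main induction estimate
  have hmain : ∀ n, 2 ≤ n → n ≤ m →
      ∑ j' ∈ Finset.Icc 2 n, (1 - r (j' - 1) / r j') < Real.log (r n) - Real.log (r 1) := by
    intro n h2 hnm
    induction n, h2 using Nat.le_induction with
    | base =>
      simp only [Finset.Icc_self, Finset.sum_singleton]
      exact hkey (r 1) (r 2) (hpos 1 le_rfl (by omega)) (hr 1 (by omega))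
    | succ k hk ih =>
      rw [Finset.sum_Icc_succ_top (by omega)]
      have h1 := ih (by omega)
      have h2 := hkey (r k) (r (k + 1)) (hpos k (by omega) (by omega)) (hr k (by omega))
      simp only [Nat.add_sub_cancel]
      linarith
  set S := ∑ j' ∈ Finset.Icc 2 m, (1 - r (j' - 1) / r j') with hS
  have hSnonneg : 0 ≤ S := by
    apply Finset.sum_nonneg
    intro j hj
    simp only [Finset.mem_Icc] at hj
    have hj1 : 0 < r (j - 1) := hpos (j - 1) (by omega) (by omega)
    have hjj : r (j - 1) < r j := by
      have := hr (j - 1) (by omega)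
      rwa [Nat.sub_add_cancel (by omega)] at this
    have : r (j - 1) / r j < 1 := (div_lt_one (hj1.trans hjj)).2 hjj
    linarith
  have hL : S < Real.log (r m / r 1) := by
    rw [Real.log_div (hpos m (by omega) le_rfl).ne' (hpos 1 le_rfl (by omega)).ne']
    exact hmain m hm le_rfl
  have hσ1 : σ 1 = (1 + S)⁻¹ := by
    rw [hσ 1 (by simp; omega)]
    simp [hr0]
  rw [hσ1, ← one_div]
  apply one_div_lt_one_div_of_lt
  · linarith
  · linarith
end

section
/- If m ≥ 2 and α ∈ (0,1) satisfies 1 − e^{−α} = (1 − α)/ln(r⁽ᵐ⁾/r⁽¹⁾), then 1 − e^{−α} < 1 − e^{−α⁽¹⁾}, i.e., α < α⁽¹⁾. -/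
private lemma tele_sum (f : ℕ → ℝ) : ∀ m : ℕ, 1 ≤ m →
    (∑ j ∈ Finset.Icc 2 m, (f j - f (j - 1))) = f m - f 1 := by
  intro m hm
  induction m, hm using Nat.le_induction with
  | base => simp
  | succ n hn ih =>
    rw [Finset.sum_Icc_succ_top (by omega : 2 ≤ n + 1), ih]
    simp

/-- Proposition 2, inequality (10): if `m ≥ 2` and `α ∈ (0,1)` satisfies
`1 − e^{−α} = (1 − α)/ln(r⁽ᵐ⁾/r⁽¹⁾)`, then
`1 − e^{−α} < 1 − e^{−α⁽¹⁾}`, i.e., `α < α⁽¹⁾`. -/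
theorem stmt_7 (m : ℕ) (hm : 2 ≤ m) (r : ℕ → ℝ) (hr0 : r 0 = 0)
    (hr : ∀ j, j < m → r j < r (j + 1))
    (α : ℕ → ℝ)
    (hαpos : ∀ j ∈ Finset.Icc 1 m, 0 < α j)
    (hαsum : (∑ j ∈ Finset.Icc 1 m, α j) = 1)
    (hαeq : ∀ j ∈ Finset.Icc 2 m,
      1 - Real.exp (-(α j)) = (1 - r (j - 1) / r j) * (1 - Real.exp (-(α 1))))
    (a : ℝ) (ha : a ∈ Set.Ioo (0 : ℝ) 1)
    (haeq : 1 - Real.exp (-a) = (1 - a) / Real.log (r m / r 1)) :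
    1 - Real.exp (-a) < 1 - Real.exp (-(α 1)) ∧ a < α 1 := by
  -- positivity of r
  have rpos : ∀ j, 1 ≤ j → j ≤ m → 0 < r j := by
    intro j hj1 hjm
    induction j with
    | zero => omega
    | succ n ih =>
      rcases Nat.eq_zero_or_pos n with h | h
      · subst h; have := hr 0 (by omega); rw [hr0] at this; exact this
      · have := hr n (by omega)
        have := ih (by omega) (by omega)
        linarith
  have rmono : ∀ j, 2 ≤ j → j ≤ m → r 1 < r j := by
    intro j hj2 hjm
    induction j with
    | zero => omega
    | succ n ih =>
      rcases Nat.lt_or_ge n 2 with h | h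
      · interval_cases n
        · omega
        · exact hr 1 (by omega)
      · have := hr n (by omega)
        have := ih h (by omega)
        linarith
  have hr1 : 0 < r 1 := rpos 1 le_rfl (by omega)
  have hrm : r 1 < r m := rmono m hm le_rfl
  set L : ℝ := Real.log (r m) - Real.log (r 1) with hL
  have hlogdiv : Real.log (r m / r 1) = L := Real.log_div (by linarith) (by linarith)
  have hLpos : 0 < L := by
    have := Real.log_lt_log hr1 hrm
    simp [hL]; linarith
  set c : ℝ := 1 - Real.exp (-(α 1)) with hc
  have hα1pos : 0 < α 1 := hαpos 1 (by simp; omega)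
  have hcpos : 0 < c := by
    have : Real.exp (-(α 1)) < 1 := by
      rw [Real.exp_lt_one_iff]; linarith
    simp [hc]; linarith
  have hclt1 : c < 1 := by
    have : 0 < Real.exp (-(α 1)) := Real.exp_pos _
    simp [hc]; linarith
  -- key per-term bound
  have key : ∀ j ∈ Finset.Icc 2 m, α j < c * (Real.log (r j) - Real.log (r (j - 1))) := by
    intro j hj
    simp only [Finset.mem_Icc] at hj
    have hj1 : 1 ≤ j - 1 := by omega
    have hjm : j - 1 ≤ m := by omega
    have hrj1 : 0 < r (j - 1) := rpos _ hj1 hjm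
    have hrjlt : r (j - 1) < r j := by
      have := hr (j - 1) (by omega)
      rwa [Nat.sub_add_cancel (by omega)] at this
    have hrj : 0 < r j := lt_trans hrj1 hrjlt
    set t : ℝ := r (j - 1) / r j with ht
    have ht0 : 0 < t := div_pos hrj1 hrj
    have ht1 : t < 1 := (div_lt_one hrj).mpr hrjlt
    -- strict Bernoulli: t ^ c < 1 + c * (t - 1)
    have hbern : t ^ c < 1 + c * (t - 1) := by
      have := rpow_one_add_lt_one_add_mul_self (s := t - 1) (by linarith)
        (by intro h; apply absurd (by linarith : t = 1); linarith)
        hcpos hclt1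
      simpa using this
    have heq := hαeq j (Finset.mem_Icc.mpr ⟨hj.1, hj.2⟩)
    have hexp : Real.exp (-(α j)) = 1 + c * (t - 1) := by
      rw [← ht] at heq; linear_combination -heq
    have hrpow : t ^ c = Real.exp (c * Real.log t) := by
      rw [Real.rpow_def_of_pos ht0, mul_comm]
    have hlt : Real.exp (c * Real.log t) < Real.exp (-(α j)) := by
      rw [← hrpow, hexp]; exact hbern
    have := (Real.exp_lt_exp.mp hlt)
    have hlogt : Real.log t = Real.log (r (j - 1)) - Real.log (r j) :=
      Real.log_div (ne_of_gt hrj1) (ne_of_gt hrj)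
    rw [hlogt] at this
    nlinarith
  -- sum decomposition
  have hsplit : α 1 + (∑ j ∈ Finset.Icc 2 m, α j) = 1 := by
    rw [← hαsum]
    have h1 : (1 : ℕ) ∈ Finset.Icc 1 m := by simp; omega
    rw [← Finset.add_sum_erase _ _ h1]
    congr 1
    rw [Finset.Icc_erase_left]
    rfl
  -- strict sum bound
  have hnonempty : (Finset.Icc 2 m).Nonempty := ⟨2, by simp; omega⟩
  have hsumlt : (∑ j ∈ Finset.Icc 2 m, α j) <
      ∑ j ∈ Finset.Icc 2 m, c * (Real.log (r j) - Real.log (r (j - 1))) :=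
    Finset.sum_lt_sum_of_nonempty hnonempty key
  have htele : (∑ j ∈ Finset.Icc 2 m, c * (Real.log (r j) - Real.log (r (j - 1)))) = c * L := by
    rw [← Finset.mul_sum, tele_sum (fun j => Real.log (r j)) m (by omega)]
  have hmain : 1 - α 1 < c * L := by
    rw [htele] at hsumlt; linarith
  -- conclude a < α 1
  have halt : a < α 1 := by
    by_contra h
    push_neg at h
    have h1 : Real.exp (-a) ≤ Real.exp (-(α 1)) := by
      apply Real.exp_le_exp.mpr; linarith
    have h2 : (1 - a) / L < c := by
      rw [div_lt_iff₀ hLpos]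
      nlinarith
    rw [hlogdiv] at haeq
    simp only [hc] at h2
    linarith
  refine ⟨?_, halt⟩
  have : Real.exp (-(α 1)) < Real.exp (-a) := Real.exp_lt_exp.mpr (by linarith)
  linarith
end

section
/- For every positive integer k, all L, L' ∈ [0,1] with L' ≤ L, and every w ∈ [0,1), the comonotone roundings satisfy |(L̃(w) − L̃'(w)) − (L − L')| ≤ 1/k. -/
lemma round_eq_ceil (x w : ℝ) (h0 : 0 ≤ w) (h1 : w < 1) :
    (if w < x - (⌊x⌋ : ℝ) then ((⌊x⌋ : ℝ) + 1) else (⌊x⌋ : ℝ)) = (⌈x - w⌉ : ℤ) := by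
  split_ifs with h
  · have : (⌈x - w⌉ : ℤ) = ⌊x⌋ + 1 := by
      rw [Int.ceil_eq_iff]
      constructor
      · push_cast; linarith
      · push_cast; linarith [Int.lt_floor_add_one x, Int.floor_le x]
    rw [this]; push_cast; ring
  · have : (⌈x - w⌉ : ℤ) = ⌊x⌋ := by
      rw [Int.ceil_eq_iff]
      constructor
      · push_cast; linarith [Int.floor_le x]
      · push_cast; linarith
    rw [this]

/-- Comonotone rounding property (13): for `L' ≤ L` rounded with the same seed
`w ∈ [0,1)`, the distance between the roundings differs from `L − L'`
by at most `1/k`. -/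
theorem stmt_11 (k : ℕ) (hk : 0 < k) (L L' : ℝ)
    (hL : L ∈ Set.Icc (0 : ℝ) 1) (hL' : L' ∈ Set.Icc (0 : ℝ) 1) (hle : L' ≤ L)
    (w : ℝ) (hw : w ∈ Set.Ico (0 : ℝ) 1) :
    |((if w < L * k - (⌊L * k⌋ : ℝ) then ((⌊L * k⌋ : ℝ) + 1) / k
          else (⌊L * k⌋ : ℝ) / k) -
        (if w < L' * k - (⌊L' * k⌋ : ℝ) then ((⌊L' * k⌋ : ℝ) + 1) / k
          else (⌊L' * k⌋ : ℝ) / k)) -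
      (L - L')| ≤ 1 / k := by
  obtain ⟨hw0, hw1⟩ := hw
  have hkR : (0 : ℝ) < k := by exact_mod_cast hk
  have e1 : (if w < L * k - (⌊L * k⌋ : ℝ) then ((⌊L * k⌋ : ℝ) + 1) / k
          else (⌊L * k⌋ : ℝ) / k) = (⌈L * k - w⌉ : ℝ) / k := by
    rw [← round_eq_ceil (L * k) w hw0 hw1]
    split_ifs <;> rfl
  have e2 : (if w < L' * k - (⌊L' * k⌋ : ℝ) then ((⌊L' * k⌋ : ℝ) + 1) / k
          else (⌊L' * k⌋ : ℝ) / k) = (⌈L' * k - w⌉ : ℝ) / k := by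
    rw [← round_eq_ceil (L' * k) w hw0 hw1]
    split_ifs <;> rfl
  rw [e1, e2]
  have hL1 : L = (L * k) / k := by field_simp
  have hL2 : L' = (L' * k) / k := by field_simp
  have key : |((⌈L * k - w⌉ : ℝ) - (⌈L' * k - w⌉ : ℝ)) - (L * k - L' * k)| ≤ 1 := by
    have c1 := Int.le_ceil (L * k - w)
    have c2 := Int.ceil_lt_add_one (L * k - w)
    have c3 := Int.le_ceil (L' * k - w)
    have c4 := Int.ceil_lt_add_one (L' * k - w)
    rw [abs_le]
    constructor <;> linarith
  have e3 : (⌈L * k - w⌉ : ℝ) / k - (⌈L' * k - w⌉ : ℝ) / k - (L - L')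
      = (((⌈L * k - w⌉ : ℝ) - (⌈L' * k - w⌉ : ℝ)) - (L * k - L' * k)) / k := by
    field_simp
  rw [e3, abs_div, abs_of_pos hkR]
  gcongr
end

section
/- Fix j ∈ {1, ..., m} and τ ∈ [0,1]. For all real numbers λ_j, ..., λ_m with λ_ℓ ≥ 0 for each ℓ and Σ_{ℓ=j}^{m} λ_ℓ ≤ τ, one has Σ_{ℓ=j}^{m} r⁽ℓ⁾·B⁽ℓ⁾·(1 − e^{−λ_ℓ}) ≤ Σ_{ℓ=j}^{m} r⁽ℓ⁾·B⁽ℓ⁾·(1 − exp(−α⁽ℓ⁾ + (A⁽ʲ⁾ − τ)/(m − j + 1))). Moreover, if α⁽ℓ⁾ ≥ (A⁽ʲ⁾ − τ)/(m − j + 1) for every ℓ ∈ {j, ..., m}, the bound is attained by λ_ℓ = α⁽ℓ⁾ − (A⁽ʲ⁾ − τ)/(m − j + 1). -/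
/-!
The weights are `r⁽ℓ⁾B⁽ℓ⁾ = K e^{α⁽ℓ⁾}` with `K = r⁽¹⁾e^{−α⁽¹⁾} > 0`, so at the shifted point
`μ_ℓ = α⁽ℓ⁾ − c`, `c = (A⁽ʲ⁾ − τ)/(m − j + 1)`, every summand `r⁽ℓ⁾B⁽ℓ⁾(1 − e^{−λ})` has the same
derivative `K e^c`. By concavity each summand lies below its tangent line at `μ_ℓ`, and the
tangent terms add up to `K e^c (Σ λ_ℓ − Σ μ_ℓ) = K e^c (Σ λ_ℓ − τ) ≤ 0`.
-/

open Finset Real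

lemma one_sub_exp_neg_le_tangent (x y : ℝ) :
    1 - exp (-x) ≤ 1 - exp (-y) + exp (-y) * (x - y) := by
  have h := mul_le_mul_of_nonneg_left (add_one_le_exp (y - x)) (exp_pos (-y)).le
  rw [← exp_add, show -y + (y - x) = -x by ring] at h
  linarith

theorem sum_mul_one_sub_exp_neg_le_of_mul_exp_neg_eq {ι : Type*} (s : Finset ι)
    (w μ lam : ι → ℝ) (κ : ℝ) (hκ : 0 ≤ κ) (hw : ∀ i ∈ s, w i * exp (-μ i) = κ)
    (hsum : ∑ i ∈ s, lam i ≤ ∑ i ∈ s, μ i) :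
    ∑ i ∈ s, w i * (1 - exp (-lam i)) ≤ ∑ i ∈ s, w i * (1 - exp (-μ i)) := by
  have hw_nonneg : ∀ i ∈ s, 0 ≤ w i := fun i hi => by
    have h : w i = κ * exp (μ i) := by
      rw [← hw i hi, mul_assoc, ← exp_add, neg_add_cancel, exp_zero, mul_one]
    rw [h]
    positivity
  calc ∑ i ∈ s, w i * (1 - exp (-lam i))
      ≤ ∑ i ∈ s, (w i * (1 - exp (-μ i)) + κ * (lam i - μ i)) := by
        refine sum_le_sum fun i hi => ?_
        calc w i * (1 - exp (-lam i))
            ≤ w i * (1 - exp (-μ i) + exp (-μ i) * (lam i - μ i)) :=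
              mul_le_mul_of_nonneg_left (one_sub_exp_neg_le_tangent _ _) (hw_nonneg i hi)
          _ = w i * (1 - exp (-μ i)) + κ * (lam i - μ i) := by rw [← hw i hi]; ring
    _ = ∑ i ∈ s, w i * (1 - exp (-μ i)) + κ * (∑ i ∈ s, lam i - ∑ i ∈ s, μ i) := by
        rw [sum_add_distrib, ← mul_sum, sum_sub_distrib]
    _ ≤ ∑ i ∈ s, w i * (1 - exp (-μ i)) := by
        have := mul_nonpos_of_nonneg_of_nonpos hκ (sub_nonpos.mpr hsum)
        linarith

lemma sum_sub_div_card_eq {ι : Type*} {s : Finset ι} (hs : s.Nonempty) (f : ι → ℝ) (t : ℝ) :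
    ∑ i ∈ s, (f i - (∑ k ∈ s, f k - t) / #s) = t := by
  have hcard : (#s : ℝ) ≠ 0 := by exact_mod_cast hs.card_pos.ne'
  rw [sum_sub_distrib, sum_const, nsmul_eq_mul, mul_div_cancel₀ _ hcard]
  ring

lemma natCast_card_Icc_eq {j m : ℕ} (hjm : j ≤ m) : (#(Icc j m) : ℝ) = (m : ℝ) - j + 1 := by
  rw [Nat.card_Icc, Nat.cast_sub (by omega)]
  push_cast
  ring

theorem stmt_13_general (m : ℕ) (r : ℕ → ℝ) (hr0 : r 0 = 0)
    (hr : ∀ j, j < m → r j < r (j + 1))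
    (α : ℕ → ℝ)
    (B : ℕ → ℝ)
    (hB : ∀ j ∈ Finset.Icc 1 m,
      r j * B j * Real.exp (-(α j)) = r 1 * Real.exp (-(α 1)))
    (j : ℕ) (hj : j ∈ Finset.Icc 1 m) (τ : ℝ)
    (A : ℝ) (hA : A = ∑ ℓ ∈ Finset.Icc j m, α ℓ) :
    (∀ lam : ℕ → ℝ, (∀ ℓ ∈ Finset.Icc j m, 0 ≤ lam ℓ) →
      (∑ ℓ ∈ Finset.Icc j m, lam ℓ) ≤ τ →
      (∑ ℓ ∈ Finset.Icc j m, r ℓ * B ℓ * (1 - Real.exp (-(lam ℓ)))) ≤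
        ∑ ℓ ∈ Finset.Icc j m,
          r ℓ * B ℓ * (1 - Real.exp (-(α ℓ) + (A - τ) / ((m : ℝ) - j + 1)))) ∧
    ((∀ ℓ ∈ Finset.Icc j m, (A - τ) / ((m : ℝ) - j + 1) ≤ α ℓ) →
      (∀ ℓ ∈ Finset.Icc j m, 0 ≤ α ℓ - (A - τ) / ((m : ℝ) - j + 1)) ∧
      (∑ ℓ ∈ Finset.Icc j m, (α ℓ - (A - τ) / ((m : ℝ) - j + 1))) ≤ τ ∧
      (∑ ℓ ∈ Finset.Icc j m,
          r ℓ * B ℓ * (1 - Real.exp (-(α ℓ - (A - τ) / ((m : ℝ) - j + 1))))) =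
        ∑ ℓ ∈ Finset.Icc j m,
          r ℓ * B ℓ * (1 - Real.exp (-(α ℓ) + (A - τ) / ((m : ℝ) - j + 1)))) := by
  obtain ⟨hj1, hjm⟩ := mem_Icc.mp hj
  set c := (A - τ) / ((m : ℝ) - j + 1)
  have hshift : ∀ ℓ, -(α ℓ) + c = -(α ℓ - c) := fun ℓ => by ring
  have hsum_shift : ∑ ℓ ∈ Icc j m, (α ℓ - c) = τ := by
    have h := sum_sub_div_card_eq (nonempty_Icc.mpr hjm) α τ
    rwa [natCast_card_Icc_eq hjm, ← hA] at h
  have hr1 : 0 < r 1 := by simpa [hr0] using hr 0 (by omega)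
  have hgain : ∀ ℓ ∈ Icc j m,
      r ℓ * B ℓ * exp (-(α ℓ - c)) = r 1 * exp (-(α 1)) * exp c := fun ℓ hℓ => by
    rw [← hshift, exp_add, ← mul_assoc,
      hB ℓ (mem_Icc.mpr ⟨hj1.trans (mem_Icc.mp hℓ).1, (mem_Icc.mp hℓ).2⟩)]
  simp only [hshift]
  refine ⟨fun lam _ hlam => ?_, fun hc => ⟨fun ℓ hℓ => sub_nonneg.mpr (hc ℓ hℓ),
    hsum_shift.le, trivial⟩⟩
  exact sum_mul_one_sub_exp_neg_le_of_mul_exp_neg_eq _ _ _ lam _ (by positivity) hgain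
    (hsum_shift ▸ hlam)

/-- Lemma 4: for `j ∈ {1,…,m}` and `τ ∈ [0,1]`, among nonnegative `λ_j, …, λ_m`
with `Σ λ_ℓ ≤ τ`, the quantity `Σ_{ℓ=j}^m r⁽ℓ⁾B⁽ℓ⁾(1 − e^{−λ_ℓ})` is at most
`Σ_{ℓ=j}^m r⁽ℓ⁾B⁽ℓ⁾(1 − exp(−α⁽ℓ⁾ + (A⁽ʲ⁾ − τ)/(m − j + 1)))`, and (provided
`α⁽ℓ⁾ ≥ (A⁽ʲ⁾ − τ)/(m − j + 1)` for all `ℓ`) this bound is attained at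
`λ_ℓ = α⁽ℓ⁾ − (A⁽ʲ⁾ − τ)/(m − j + 1)`. -/
theorem stmt_13 (m : ℕ) (hm : 1 ≤ m) (r : ℕ → ℝ) (hr0 : r 0 = 0)
    (hr : ∀ j, j < m → r j < r (j + 1))
    (α : ℕ → ℝ)
    (hαpos : ∀ j ∈ Finset.Icc 1 m, 0 < α j)
    (hαsum : (∑ j ∈ Finset.Icc 1 m, α j) = 1)
    (hαeq : ∀ j ∈ Finset.Icc 2 m,
      1 - Real.exp (-(α j)) = (1 - r (j - 1) / r j) * (1 - Real.exp (-(α 1))))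
    (B : ℕ → ℝ) (hB1 : B 1 = 1)
    (hB : ∀ j ∈ Finset.Icc 1 m,
      r j * B j * Real.exp (-(α j)) = r 1 * Real.exp (-(α 1)))
    (j : ℕ) (hj : j ∈ Finset.Icc 1 m) (τ : ℝ) (hτ : τ ∈ Set.Icc (0 : ℝ) 1)
    (A : ℝ) (hA : A = ∑ ℓ ∈ Finset.Icc j m, α ℓ) :
    (∀ lam : ℕ → ℝ, (∀ ℓ ∈ Finset.Icc j m, 0 ≤ lam ℓ) →
      (∑ ℓ ∈ Finset.Icc j m, lam ℓ) ≤ τ →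
      (∑ ℓ ∈ Finset.Icc j m, r ℓ * B ℓ * (1 - Real.exp (-(lam ℓ)))) ≤
        ∑ ℓ ∈ Finset.Icc j m,
          r ℓ * B ℓ * (1 - Real.exp (-(α ℓ) + (A - τ) / ((m : ℝ) - j + 1)))) ∧
    ((∀ ℓ ∈ Finset.Icc j m, (A - τ) / ((m : ℝ) - j + 1) ≤ α ℓ) →
      (∀ ℓ ∈ Finset.Icc j m, 0 ≤ α ℓ - (A - τ) / ((m : ℝ) - j + 1)) ∧
      (∑ ℓ ∈ Finset.Icc j m, (α ℓ - (A - τ) / ((m : ℝ) - j + 1))) ≤ τ ∧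
      (∑ ℓ ∈ Finset.Icc j m,
          r ℓ * B ℓ * (1 - Real.exp (-(α ℓ - (A - τ) / ((m : ℝ) - j + 1))))) =
        ∑ ℓ ∈ Finset.Icc j m,
          r ℓ * B ℓ * (1 - Real.exp (-(α ℓ) + (A - τ) / ((m : ℝ) - j + 1)))) :=
  stmt_13_general m r hr0 hr α B hB j hj τ A hA
end

section
/- For every j ∈ {1, ..., m} and every w in the open interval (L⁽ʲ⁻¹⁾, L⁽ʲ⁾), the value function Φ is differentiable at w and satisfies Φ′(w) − Φ(w) = r⁽ʲ⁾·(1/F − 1), where F := 1 − e^{−α⁽¹⁾}. -/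
/-- The value function satisfies the differential equation (32): for any
`j ∈ {1,…,m}` and `w` in the open segment `(L⁽ʲ⁻¹⁾, L⁽ʲ⁾)`, `Φ` is
differentiable at `w` with `Φ′(w) − Φ(w) = r⁽ʲ⁾(1/F − 1)`,
where `F = 1 − e^{−α⁽¹⁾}`. -/
theorem stmt_17 (m : ℕ) (hm : 1 ≤ m) (r : ℕ → ℝ) (hr0 : r 0 = 0)
    (hr : ∀ j, j < m → r j < r (j + 1))
    (α : ℕ → ℝ)
    (hαpos : ∀ j ∈ Finset.Icc 1 m, 0 < α j)
    (hαsum : (∑ j ∈ Finset.Icc 1 m, α j) = 1)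
    (hαeq : ∀ j ∈ Finset.Icc 2 m,
      1 - Real.exp (-(α j)) = (1 - r (j - 1) / r j) * (1 - Real.exp (-(α 1))))
    (L : ℕ → ℝ) (hL : ∀ j, L j = ∑ j' ∈ Finset.Icc 1 j, α j')
    (Φ : ℝ → ℝ)
    (hΦ : ∀ j ∈ Finset.Icc 1 m, ∀ w ∈ Set.Icc (L (j - 1)) (L j),
      Φ w = r (j - 1) +
        (r j - r (j - 1)) * (Real.exp (w - L (j - 1)) - 1) /
          (Real.exp (α j) - 1))
    (F : ℝ) (hF : F = 1 - Real.exp (-(α 1)))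
    (j : ℕ) (hj : j ∈ Finset.Icc 1 m)
    (w : ℝ) (hw : w ∈ Set.Ioo (L (j - 1)) (L j)) :
    ∃ d : ℝ, HasDerivAt Φ d w ∧ d - Φ w = r j * (1 / F - 1) := by
  simp only [Finset.mem_Icc] at hj
  obtain ⟨hj1, hjm⟩ := hj
  have hα1 : 0 < α 1 := hαpos 1 (by simp [hm])
  have hαj : 0 < α j := hαpos j (by simp [hj1, hjm])
  have hFpos : 0 < F := by
    rw [hF]
    have : Real.exp (-(α 1)) < 1 := Real.exp_lt_one_iff.mpr (by linarith)
    linarith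
  have hA : 0 < Real.exp (α j) - 1 := by
    nlinarith [Real.add_one_lt_exp (ne_of_gt hαj)]
  -- positivity of r j
  have hrpos : 0 < r j := by
    have : ∀ k, k ≤ m → 1 ≤ k → 0 < r k := by
      intro k
      induction k with
      | zero => omega
      | succ n ih =>
        intro hkm hk1
        rcases Nat.eq_zero_or_pos n with h | h
        · subst h
          have := hr 0 (by omega)
          rw [hr0] at this
          simpa using this
        · have := ih (by omega) h
          have := hr n (by omega)
          linarith
    exact this j hjm hj1
  -- key identity
  have key : (r j - r (j - 1)) * F = r j * (1 - Real.exp (-(α j))) := by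
    rcases Nat.eq_or_lt_of_le hj1 with h | h
    · rw [← h]
      norm_num [hr0, hF]
    · have h2 : 2 ≤ j := h
      have := hαeq j (by simp [h2, hjm])
      rw [hF, this]
      field_simp
  set c := L (j - 1) with hc
  set A := Real.exp (α j) - 1 with hAdef
  set Δ := r j - r (j - 1) with hΔ
  have hgderiv : HasDerivAt (fun x => r (j - 1) + Δ * (Real.exp (x - c) - 1) / A)
      (Δ * Real.exp (w - c) / A) w := by
    have h1 : HasDerivAt (fun x : ℝ => x - c) 1 w := (hasDerivAt_id w).sub_const c
    have h2 : HasDerivAt (fun x : ℝ => Real.exp (x - c)) (Real.exp (w - c)) w := by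
      simpa using h1.exp
    have h3 := (((h2.sub_const 1).const_mul Δ).div_const A).const_add (r (j - 1))
    simpa [mul_comm] using h3
  have heq : Φ =ᶠ[nhds w] (fun x => r (j - 1) + Δ * (Real.exp (x - c) - 1) / A) := by
    filter_upwards [isOpen_Ioo.mem_nhds hw] with x hx
    exact hΦ j (by simp [hj1, hjm]) x ⟨le_of_lt hx.1, le_of_lt hx.2⟩
  refine ⟨Δ * Real.exp (w - c) / A, hgderiv.congr_of_eventuallyEq heq, ?_⟩
  have hΦw : Φ w = r (j - 1) + Δ * (Real.exp (w - c) - 1) / A :=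
    hΦ j (by simp [hj1, hjm]) w ⟨le_of_lt hw.1, le_of_lt hw.2⟩
  rw [hΦw]
  have hexp : Real.exp (-(α j)) * Real.exp (α j) = 1 := by
    rw [← Real.exp_add]; simp
  have hAne : A ≠ 0 := ne_of_gt hA
  have hFne : F ≠ 0 := ne_of_gt hFpos
  have hEne : Real.exp (α j) ≠ 0 := Real.exp_ne_zero _
  field_simp
  linear_combination Real.exp (α j) * key - r j * hexp - A * F * hΔ +
    (Δ * F - r j) * hAdef
end

section
/- Let j ∈ {1, ..., m} and let w ∈ [0, L⁽ʲ⁾) with w ∉ {L⁽⁰⁾, L⁽¹⁾, ..., L⁽ᵐ⁾}. Then (1 − e^{−α⁽¹⁾})·(Φ′(w) + r⁽ʲ⁾ − Φ(w)) ≤ r⁽ʲ⁾. -/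
/-- Inequality (32): for `j ∈ {1,…,m}` and `w ∈ [0, L⁽ʲ⁾)` not equal to any
segment border, `(1 − e^{−α⁽¹⁾})·(Φ′(w) + r⁽ʲ⁾ − Φ(w)) ≤ r⁽ʲ⁾`. -/
theorem stmt_18 (m : ℕ) (hm : 1 ≤ m) (r : ℕ → ℝ) (hr0 : r 0 = 0)
    (hr : ∀ j, j < m → r j < r (j + 1))
    (α : ℕ → ℝ)
    (hαpos : ∀ j ∈ Finset.Icc 1 m, 0 < α j)
    (hαsum : (∑ j ∈ Finset.Icc 1 m, α j) = 1)
    (hαeq : ∀ j ∈ Finset.Icc 2 m,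
      1 - Real.exp (-(α j)) = (1 - r (j - 1) / r j) * (1 - Real.exp (-(α 1))))
    (L : ℕ → ℝ) (hL : ∀ j, L j = ∑ j' ∈ Finset.Icc 1 j, α j')
    (Φ Φ' : ℝ → ℝ)
    (hΦ : ∀ j ∈ Finset.Icc 1 m, ∀ w ∈ Set.Icc (L (j - 1)) (L j),
      Φ w = r (j - 1) +
        (r j - r (j - 1)) * (Real.exp (w - L (j - 1)) - 1) /
          (Real.exp (α j) - 1))
    (hΦ' : ∀ w ∈ Set.Icc (0 : ℝ) 1, (∀ j' ≤ m, w ≠ L j') →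
      HasDerivAt Φ (Φ' w) w)
    (j : ℕ) (hj : j ∈ Finset.Icc 1 m)
    (w : ℝ) (hw : w ∈ Set.Ico 0 (L j)) (hwb : ∀ j' ≤ m, w ≠ L j') :
    (1 - Real.exp (-(α 1))) * (Φ' w + r j - Φ w) ≤ r j := by
  obtain ⟨hj1, hjm⟩ := Finset.mem_Icc.mp hj
  -- basic facts
  have hL0 : L 0 = 0 := by simp [hL]
  have hLsucc : ∀ i : ℕ, L (i + 1) = L i + α (i + 1) := by
    intro i
    rw [hL, hL, Finset.sum_Icc_succ_top (Nat.succ_le_succ (Nat.zero_le i))]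
  have rmono : ∀ a b : ℕ, a ≤ b → b ≤ m → r a ≤ r b := by
    intro a b hab hbm
    induction b with
    | zero => simp [Nat.le_zero.mp hab]
    | succ n ih =>
      rcases Nat.lt_or_ge a (n+1) with h | h
      · exact le_trans (ih (Nat.lt_succ_iff.mp h) (le_trans (Nat.le_succ n) hbm))
          (hr n (Nat.lt_of_succ_le hbm)).le
      · have : a = n + 1 := le_antisymm hab h
        simp [this]
  have Lmono : ∀ a b : ℕ, a ≤ b → b ≤ m → L a ≤ L b := by
    intro a b hab hbm
    induction b with
    | zero => simp [Nat.le_zero.mp hab]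
    | succ n ih =>
      rcases Nat.lt_or_ge a (n+1) with h | h
      · have h1 := ih (Nat.lt_succ_iff.mp h) (le_trans (Nat.le_succ n) hbm)
        have h2 : 0 < α (n+1) := hαpos _ (Finset.mem_Icc.mpr ⟨Nat.succ_le_succ (Nat.zero_le n), hbm⟩)
        rw [hLsucc]; linarith
      · have : a = n + 1 := le_antisymm hab h
        simp [this]
  have hLm : L m = 1 := by rw [hL]; exact hαsum
  -- find the segment containing w
  have hex : ∃ i, w < L i := ⟨j, hw.2⟩
  set k := Nat.find hex with hkdef
  have hk1 : w < L k := Nat.find_spec hex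
  have hkj : k ≤ j := Nat.find_le hw.2
  have hkm : k ≤ m := le_trans hkj hjm
  have hkpos : 1 ≤ k := by
    by_contra h
    have hk0 : k = 0 := by omega
    have := hk1
    rw [hk0, hL0] at this
    linarith [hw.1]
  have hklb : L (k - 1) < w := by
    have h1 : ¬ w < L (k - 1) := Nat.find_min hex (by omega)
    have h2 : w ≠ L (k - 1) := hwb (k - 1) (by omega)
    push_neg at h1
    exact lt_of_le_of_ne h1 (Ne.symm h2)
  have hkIcc : k ∈ Finset.Icc 1 m := Finset.mem_Icc.mpr ⟨hkpos, hkm⟩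
  -- positivity facts
  have hα1pos : 0 < α 1 := hαpos 1 (Finset.mem_Icc.mpr ⟨le_refl 1, hm⟩)
  have hαkpos : 0 < α k := hαpos k hkIcc
  have hE1lt : Real.exp (-(α 1)) < 1 := by
    calc Real.exp (-(α 1)) < Real.exp 0 := Real.exp_lt_exp.mpr (by linarith)
    _ = 1 := Real.exp_zero
  have hE1pos : 0 < Real.exp (-(α 1)) := Real.exp_pos _
  have hDpos : 0 < Real.exp (α k) - 1 := by
    have : Real.exp 0 < Real.exp (α k) := Real.exp_lt_exp.mpr hαkpos
    rw [Real.exp_zero] at this; linarith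
  have hDne : Real.exp (α k) - 1 ≠ 0 := ne_of_gt hDpos
  -- the formula on segment k
  set a := L (k - 1) with hadef
  set A := r k - r (k - 1) with hAdef
  set D := Real.exp (α k) - 1 with hDdef
  have hΦeq : ∀ x ∈ Set.Icc a (L k), Φ x = r (k-1) + A * (Real.exp (x - a) - 1) / D :=
    hΦ k hkIcc
  -- derivative
  set d := A * Real.exp (w - a) / D with hddef
  have hg : HasDerivAt (fun x => r (k-1) + A * (Real.exp (x - a) - 1) / D) d w := by
    have h1 : HasDerivAt (fun x : ℝ => Real.exp (x - a)) (Real.exp (w - a)) w := by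
      simpa using (((hasDerivAt_id w).sub_const a).exp :)
    have h2 := (((h1.sub_const 1).const_mul A).div_const D).const_add (r (k-1))
    simpa [mul_comm] using h2
  have heq : Φ =ᶠ[nhds w] (fun x => r (k-1) + A * (Real.exp (x - a) - 1) / D) := by
    filter_upwards [Ioo_mem_nhds hklb hk1] with x hx
    exact hΦeq x ⟨hx.1.le, hx.2.le⟩
  have hgΦ : HasDerivAt Φ d w := hg.congr_of_eventuallyEq heq
  have hw01 : w ∈ Set.Icc (0:ℝ) 1 := ⟨hw.1, le_of_lt (lt_of_lt_of_le hw.2 (by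
    rw [← hLm]; exact Lmono j m hjm le_rfl))⟩
  have hΦ'w : Φ' w = d := (hΦ' w hw01 hwb).unique hgΦ
  have hΦw : Φ w = r (k-1) + A * (Real.exp (w - a) - 1) / D :=
    hΦeq w ⟨hklb.le, hk1.le⟩
  -- key identity
  have hrkpos : 0 < r k := by
    have := rmono 1 k hkpos hkm
    have h1 : r 0 < r 1 := hr 0 (by omega)
    linarith [hr0 ▸ h1]
  have key : (1 - Real.exp (-(α 1))) * A = r k * (1 - Real.exp (-(α k))) := by
    rcases Nat.lt_or_ge k 2 with h | h
    · have hk1' : k = 1 := by omega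
      rw [hAdef, hk1']; simp [hr0]; ring
    · have := hαeq k (Finset.mem_Icc.mpr ⟨h, hkm⟩)
      rw [hAdef]
      field_simp [ne_of_gt hrkpos] at this ⊢
      nlinarith [this]
  have hexpk : Real.exp (-(α k)) * Real.exp (α k) = 1 := by
    rw [← Real.exp_add]; simp
  -- rewrite goal
  rw [hΦ'w, hΦw, hddef]
  have hsimp : A * Real.exp (w - a) / D + r j - (r (k-1) + A * (Real.exp (w - a) - 1) / D)
      = A / D - r (k-1) + r j := by
    field_simp
    ring
  rw [hsimp]
  -- (1-E1)*A/D = r k * exp(-α k)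
  have hAD : (1 - Real.exp (-(α 1))) * (A / D) = r k * Real.exp (-(α k)) := by
    rw [mul_div_assoc', key]
    rw [div_eq_iff hDne, hDdef]
    nlinarith [hexpk]
  have hrkj : r k ≤ r j := rmono k j hkj hjm
  nlinarith [hAD, key, mul_nonneg hE1pos.le (sub_nonneg.mpr hrkj),
    mul_le_mul_of_nonneg_left hrkj (le_of_lt (sub_pos.mpr hE1lt))]
end

section
/- If m ≥ 2, then for every j ∈ {1, ..., m−1}, e^{−α⁽ʲ⁾} ≥ B⁽ʲ⁺¹⁾/B⁽ʲ⁾; equivalently, α⁽ʲ⁾ ≤ ln(B⁽ʲ⁾/B⁽ʲ⁺¹⁾). -/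
/-- Feasibility of the booking limits in the counterexample (Remark 1): for
`j ∈ {1,…,m−1}`, `e^{−α⁽ʲ⁾} ≥ B⁽ʲ⁺¹⁾/B⁽ʲ⁾`, equivalently
`α⁽ʲ⁾ ≤ ln(B⁽ʲ⁾/B⁽ʲ⁺¹⁾)`. -/
theorem stmt_19 (m : ℕ) (hm : 2 ≤ m) (r : ℕ → ℝ) (hr0 : r 0 = 0)
    (hr : ∀ j, j < m → r j < r (j + 1))
    (α : ℕ → ℝ)
    (hαpos : ∀ j ∈ Finset.Icc 1 m, 0 < α j)
    (hαsum : (∑ j ∈ Finset.Icc 1 m, α j) = 1)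
    (hαeq : ∀ j ∈ Finset.Icc 2 m,
      1 - Real.exp (-(α j)) = (1 - r (j - 1) / r j) * (1 - Real.exp (-(α 1))))
    (B : ℕ → ℝ)
    (hB : ∀ j ∈ Finset.Icc 1 m,
      B j = r 1 * Real.exp (-(α 1)) / (r j * Real.exp (-(α j)))) :
    ∀ j, 1 ≤ j → j < m →
      B (j + 1) / B j ≤ Real.exp (-(α j)) ∧
      α j ≤ Real.log (B j / B (j + 1)) := by
  have hrnn : ∀ k, k ≤ m → 0 ≤ r k := by
    intro k hk
    induction k with
    | zero => simp [hr0]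
    | succ n ih => exact le_of_lt (lt_of_le_of_lt (ih (by omega)) (hr n (by omega)))
  intro j hj1 hjm
  have hrjpos : 0 < r j := by
    obtain ⟨k, rfl⟩ : ∃ k, j = k + 1 := ⟨j - 1, by omega⟩
    exact (hrnn k (by omega)).trans_lt (hr k (by omega))
  have hrj1pos : 0 < r (j + 1) := hrjpos.trans (hr j hjm)
  have hr1pos : 0 < r 1 := by
    have := hr 0 (by omega); rw [hr0] at this; simpa using this
  have ejpos := Real.exp_pos (-(α j))
  have ej1pos := Real.exp_pos (-(α (j + 1)))
  have e1pos := Real.exp_pos (-(α 1))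
  have heq := hαeq (j + 1) (by simp [Finset.mem_Icc]; omega)
  simp only [Nat.add_sub_cancel] at heq
  have hα1 : 0 < α 1 := hαpos 1 (by simp [Finset.mem_Icc]; omega)
  have he1le : Real.exp (-(α 1)) ≤ 1 := by
    rw [Real.exp_le_one_iff]; linarith
  have hratio : r j / r (j + 1) < 1 := (div_lt_one hrj1pos).mpr (hr j hjm)
  have h2 : r j / r (j + 1) ≤ Real.exp (-(α (j + 1))) := by
    nlinarith [mul_nonneg (sub_nonneg.mpr hratio.le) e1pos.le]
  have key : r j ≤ Real.exp (-(α (j + 1))) * r (j + 1) := (div_le_iff₀ hrj1pos).mp h2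
  have hBj := hB j (by simp [Finset.mem_Icc]; omega)
  have hBj1 := hB (j + 1) (by simp [Finset.mem_Icc]; omega)
  have hBjpos : 0 < B j := by
    rw [hBj]; exact div_pos (mul_pos hr1pos e1pos) (mul_pos hrjpos ejpos)
  have hBj1pos : 0 < B (j + 1) := by
    rw [hBj1]; exact div_pos (mul_pos hr1pos e1pos) (mul_pos hrj1pos ej1pos)
  have hfrac_eq : B (j + 1) / B j
      = (r j * Real.exp (-(α j))) / (r (j + 1) * Real.exp (-(α (j + 1)))) := by
    rw [hBj, hBj1]
    field_simp
  have goal1 : B (j + 1) / B j ≤ Real.exp (-(α j)) := by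
    rw [hfrac_eq, div_le_iff₀ (mul_pos hrj1pos ej1pos)]
    nlinarith [mul_le_mul_of_nonneg_right key ejpos.le]
  refine ⟨goal1, ?_⟩
  have hpos2 : 0 < B (j + 1) / B j := div_pos hBj1pos hBjpos
  have hinv : 1 / Real.exp (-(α j)) ≤ 1 / (B (j + 1) / B j) :=
    one_div_le_one_div_of_le hpos2 goal1
  rw [one_div_div] at hinv
  rw [Real.exp_neg, one_div, inv_inv] at hinv
  calc α j = Real.log (Real.exp (α j)) := (Real.log_exp _).symm
    _ ≤ Real.log (B j / B (j + 1)) := Real.log_le_log (Real.exp_pos _) hinv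
end
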